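/- Let k ≥ 3 and m ≥ 1 be integers and let q ∈ (1,2) with q > q_{k−1}. If the intersection ⋂_{i=0}^m g_{q,k}^i(π_q(S_{k−1}) + 1) ∩ g_{q,k}^m(π_q(S_{k−1})) is nonempty, then q ∈ B_{m+2}. -/

import Mathlib

open Set

/-- Projection map: the value of the (0-indexed) digit sequence `a` in base `q`,
`π_q(a) = Σ_{j=0}^∞ a_j q^{-(j+1)}`. -/
noncomputable def piQ (q : ℝ) (a : ℕ → ℝ) : ℝ := ∑' j : ℕ, a j / q ^ (j + 1)

/-- `a` is a sequence of digits in `{0,1}`. -/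
def IsDigitSeq (a : ℕ → ℝ) : Prop := ∀ j, a j = 0 ∨ a j = 1

/-- `a` is a sequence of digits in `{-1,0,1}`. -/
def IsExtDigitSeq (a : ℕ → ℝ) : Prop := ∀ j, a j = -1 ∨ a j = 0 ∨ a j = 1

/-- The set of base-`q` expansions of `x`. -/
def SigmaSet (q x : ℝ) : Set (ℕ → ℝ) := {a | IsDigitSeq a ∧ piQ q a = x}

/-- The interval `I_q = [0, 1/(q-1)]`. -/
def Iq (q : ℝ) : Set ℝ := Set.Icc 0 (1 / (q - 1))

/-- The switch region `J_q = [1/q, 1/(q(q-1))]`. -/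
def Jq (q : ℝ) : Set ℝ := Set.Icc (1 / q) (1 / (q * (q - 1)))

/-- The set of points of `I_q` having exactly `m` base-`q` expansions. -/
def UqM (q : ℝ) (m : ℕ∞) : Set ℝ := {x | x ∈ Iq q ∧ (SigmaSet q x).encard = m}

/-- The set of points of `I_q` having a unique base-`q` expansion. -/
def Uq (q : ℝ) : Set ℝ := UqM q 1

/-- `B_m`: the set of bases `q ∈ (1,2)` for which some point has exactly `m` expansions. -/
def Bset (m : ℕ∞) : Set ℝ := {q | q ∈ Set.Ioo (1 : ℝ) 2 ∧ (UqM q m).Nonempty}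

/-- `x` is the `k`-Bonacci number: the root in `(1,2)` of `x^k = x^{k-1} + ⋯ + x + 1`. -/
def IsBonacci (k : ℕ) (x : ℝ) : Prop :=
  x ∈ Set.Ioo (1 : ℝ) 2 ∧ x ^ k = ∑ i ∈ Finset.range k, x ^ i

/-- `a` contains no occurrence of the word `01^k` as a consecutive block. -/
def AvoidsWord01 (k : ℕ) (a : ℕ → ℝ) : Prop :=
  ∀ i, ¬(a i = 0 ∧ ∀ j, 1 ≤ j → j ≤ k → a (i + j) = 1)

/-- `a` contains no occurrence of the word `10^k` as a consecutive block. -/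
def AvoidsWord10 (k : ℕ) (a : ℕ → ℝ) : Prop :=
  ∀ i, ¬(a i = 1 ∧ ∀ j, 1 ≤ j → j ≤ k → a (i + j) = 0)

/-- `S_k`: the set of `{0,1}`-sequences avoiding the words `01^k` and `10^k`. -/
def Sset (k : ℕ) : Set (ℕ → ℝ) := {a | IsDigitSeq a ∧ AvoidsWord01 k a ∧ AvoidsWord10 k a}

/-- `g_{q,k} = f_1^{-(k-1)} ∘ f_0^{-1}`, where `f_0^{-1}(y) = y/q` and `f_1^{-1}(y) = (y+1)/q`. -/
noncomputable def gMap (q : ℝ) (k : ℕ) (x : ℝ) : ℝ := (fun y => (y + 1) / q)^[k - 1] (x / q)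

/-- The maps `f_0(x) = qx` (for `b = false`) and `f_1(x) = qx - 1` (for `b = true`). -/
noncomputable def fDigit (q : ℝ) (b : Bool) (x : ℝ) : ℝ := if b then q * x - 1 else q * x

/-- `(a, b)` is a bounded gap of `C`: a bounded connected component of `ℝ \ C`. -/
def IsGap (C : Set ℝ) (a b : ℝ) : Prop :=
  a < b ∧ a ∈ C ∧ b ∈ C ∧ Set.Ioo a b ∩ C = ∅

/-- The left endpoint of the bridge of `C` lying immediately to the left of the gap `(a, b)`:
the right endpoint of the nearest gap to the left having diameter at least `b - a`
(or `min C` if there is no such gap). -/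
noncomputable def leftBridgeStart (C : Set ℝ) (a b : ℝ) : ℝ :=
  sSup ({sInf C} ∪ {d | ∃ c, IsGap C c d ∧ d ≤ a ∧ b - a ≤ d - c})

/-- The right endpoint of the bridge of `C` lying immediately to the right of the gap `(a, b)`. -/
noncomputable def rightBridgeEnd (C : Set ℝ) (a b : ℝ) : ℝ :=
  sInf ({sSup C} ∪ {c | ∃ d, IsGap C c d ∧ b ≤ c ∧ b - a ≤ d - c})

/-- The (Newhouse) thickness of a compact set `C ⊆ ℝ`: the infimum over all bounded gaps `G`
of the ratio of the length of the bridge on either side of `G` to the length of `G`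
(`∞` if `C` has no bounded gap). -/
noncomputable def thickness (C : Set ℝ) : ENNReal :=
  ⨅ p : {p : ℝ × ℝ // IsGap C p.1 p.2},
    ENNReal.ofReal
      (min ((p.1.1 - leftBridgeStart C p.1.1 p.1.2) / (p.1.2 - p.1.1))
        ((rightBridgeEnd C p.1.1 p.1.2 - p.1.2) / (p.1.2 - p.1.1)))

/-- `B` is contained in a gap of `A`, i.e. in a connected component of `ℝ \ A`. -/
def ContainedInGap (B A : Set ℝ) : Prop :=
  ∃ x ∈ Aᶜ, B ⊆ connectedComponentIn Aᶜ x

/-- Two sets are interleaved if neither is contained in a gap of the other. -/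
def Interleaved (A B : Set ℝ) : Prop :=
  ¬ContainedInGap B A ∧ ¬ContainedInGap A B

/-- `A` and `B` are `ε`-strongly interleaved: any compact sets within Hausdorff distance `ε`
of `A` and `B` respectively are interleaved. -/
def StronglyInterleaved (ε : ℝ) (A B : Set ℝ) : Prop :=
  ∀ A' B' : Set ℝ, IsCompact A' → IsCompact B' →
    EMetric.hausdorffEdist A A' ≤ ENNReal.ofReal ε →
    EMetric.hausdorffEdist B B' ≤ ENNReal.ofReal ε → Interleaved A' B'

/-- The sequence `0^{k-3}(01^{k-1})^∞` (0-indexed). -/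
noncomputable def seqG (k : ℕ) : ℕ → ℝ := fun j =>
  if j < k - 3 then 0 else if (j - (k - 3)) % k = 0 then 0 else 1

/-- The sequence `1^{k-3}(10^{k-1})^∞` (0-indexed). -/
noncomputable def seqH (k : ℕ) : ℕ → ℝ := fun j =>
  if j < k - 3 then 1 else if (j - (k - 3)) % k = 0 then 1 else 0

/-- The sequence `(1^{k-1}0)^∞` (0-indexed). -/
noncomputable def seqP (k : ℕ) : ℕ → ℝ := fun j => if j % k = k - 1 then 0 else 1


/-!
Once `q > q_{k-1}`, every point of `π_q(S_{k-1})` has a unique expansion: after a digit `0`, a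
sequence avoiding `01^{k-1}` has a tail worth at most that of `(1^{k-2}0)^∞`, which is `< 1`, so no
other expansion of the same point can have a `1` in that position; symmetrically after a `1`.

Splitting expansions by their first digit gives `|Σ_q(y/q)| = |Σ_q(y)| + |Σ_q(y - 1)|`. Each map
`y ↦ (y + 1)/q` in `g_{q,k}` leaves the count unchanged as long as `y + 1 > 1/(q - 1)` (then `y + 1`
has no expansion), a condition these maps preserve and which holds at `v/q` for `v ≥ 1` as soon as
`q² > q + 1`. Hence `|Σ_q(g_{q,k}(v))| = |Σ_q(v)| + |Σ_q(v - 1)|` for `v ≥ 1`, and along the chain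
`x = g_{q,k}^i(v_i)` with each `v_i - 1 ∈ π_q(S_{k-1})` the count grows by one per step: `x` has
`m + 1` expansions, `x - 1` has one, and `x/q` has `m + 2`.
-/

section Sequences

variable {α : Type*}

def seqDrop (n : ℕ) (a : ℕ → α) : ℕ → α := fun j => a (j + n)

def seqCons (d : α) (a : ℕ → α) : ℕ → α
  | 0 => d
  | j + 1 => a j

@[simp] theorem seqDrop_apply (n j : ℕ) (a : ℕ → α) : seqDrop n a j = a (j + n) := rfl

theorem seqDrop_seqDrop (m n : ℕ) (a : ℕ → α) : seqDrop m (seqDrop n a) = seqDrop (n + m) a := by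
  ext j
  simp [add_assoc, add_comm m]

theorem seqCons_injective (d : α) : Function.Injective (seqCons d) :=
  fun _ _ h => funext fun j => congrFun h (j + 1)

theorem seqCons_self_seqDrop (a : ℕ → α) : seqCons (a 0) (seqDrop 1 a) = a := by
  ext (_ | j) <;> rfl

end Sequences

section Expansions

variable {q : ℝ} {a : ℕ → ℝ}

theorem IsDigitSeq.nonneg (ha : IsDigitSeq a) (j : ℕ) : 0 ≤ a j := by
  rcases ha j with h | h <;> simp [h]

theorem IsDigitSeq.le_one (ha : IsDigitSeq a) (j : ℕ) : a j ≤ 1 := by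
  rcases ha j with h | h <;> simp [h]

theorem IsDigitSeq.seqDrop (ha : IsDigitSeq a) (n : ℕ) : IsDigitSeq (seqDrop n a) :=
  fun j => ha (j + n)

theorem IsDigitSeq.seqCons {d : ℝ} (hd : d = 0 ∨ d = 1) (ha : IsDigitSeq a) :
    IsDigitSeq (seqCons d a) := by
  rintro (_ | j)
  exacts [hd, ha j]

theorem IsDigitSeq.one_sub (ha : IsDigitSeq a) : IsDigitSeq fun j => 1 - a j := by
  intro j
  rcases ha j with h | h <;> simp [h]

theorem hasSum_one_div_pow_succ (hq : 1 < q) :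
    HasSum (fun j : ℕ => 1 / q ^ (j + 1)) (1 / (q - 1)) := by
  have hf : (fun j : ℕ => 1 / q ^ (j + 1)) = fun j => q⁻¹ ^ j * q⁻¹ := by
    ext j; rw [pow_succ, one_div, mul_inv, inv_pow]
  have hs : 1 / (q - 1) = (1 - q⁻¹)⁻¹ * q⁻¹ := by
    have : q - 1 ≠ 0 := by linarith
    field_simp
  rw [hf, hs]
  exact (hasSum_geometric_of_lt_one (by positivity) (inv_lt_one_of_one_lt₀ hq)).mul_right _

theorem summable_digit_div_pow (hq : 1 < q) (ha : IsDigitSeq a) :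
    Summable fun j => a j / q ^ (j + 1) :=
  (hasSum_one_div_pow_succ hq).summable.of_nonneg_of_le
    (fun j => div_nonneg (ha.nonneg j) (by positivity))
    (fun j => div_le_div_of_nonneg_right (ha.le_one j) (by positivity))

theorem piQ_nonneg (hq : 1 < q) (ha : IsDigitSeq a) : 0 ≤ piQ q a :=
  tsum_nonneg fun j => div_nonneg (ha.nonneg j) (by positivity)

theorem piQ_le (hq : 1 < q) (ha : IsDigitSeq a) : piQ q a ≤ 1 / (q - 1) :=
  hasSum_le (fun j => div_le_div_of_nonneg_right (ha.le_one j) (by positivity))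
    (summable_digit_div_pow hq ha).hasSum (hasSum_one_div_pow_succ hq)

theorem piQ_one_sub (hq : 1 < q) (ha : IsDigitSeq a) :
    piQ q (fun j => 1 - a j) = 1 / (q - 1) - piQ q a := by
  simp_rw [piQ, sub_div]
  exact ((hasSum_one_div_pow_succ hq).sub (summable_digit_div_pow hq ha).hasSum).tsum_eq

theorem piQ_eq_sum_add_seqDrop (hq : 1 < q) (ha : IsDigitSeq a) (n : ℕ) :
    piQ q a = ∑ t ∈ Finset.range n, a t / q ^ (t + 1) + piQ q (seqDrop n a) / q ^ n := by
  rw [piQ, ← (summable_digit_div_pow hq ha).sum_add_tsum_nat_add n, piQ, ← tsum_div_const]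
  congr 2 with j
  rw [div_div, ← pow_add, add_right_comm, seqDrop_apply]

theorem piQ_eq_head_add_tail (hq : 1 < q) (ha : IsDigitSeq a) :
    piQ q a = (a 0 + piQ q (seqDrop 1 a)) / q := by
  simp [piQ_eq_sum_add_seqDrop hq ha 1, add_div]

theorem piQ_seqCons (hq : 1 < q) {d : ℝ} (hd : d = 0 ∨ d = 1) (ha : IsDigitSeq a) :
    piQ q (seqCons d a) = (d + piQ q a) / q :=
  piQ_eq_head_add_tail hq (ha.seqCons hd)

theorem piQ_seqDrop_eq (hq : 1 < q) (ha : IsDigitSeq a) (n : ℕ) :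
    piQ q (seqDrop n a) = (a n + piQ q (seqDrop (n + 1) a)) / q := by
  rw [piQ_eq_head_add_tail hq (ha.seqDrop n), seqDrop_seqDrop, seqDrop_apply, zero_add]

end Expansions

section Counting

variable {q : ℝ}

theorem sigmaSet_div_eq (hq : 1 < q) (y : ℝ) :
    SigmaSet q (y / q) = seqCons 0 '' SigmaSet q y ∪ seqCons 1 '' SigmaSet q (y - 1) := by
  ext e
  constructor
  · rintro ⟨he, hey⟩
    have htail : piQ q (seqDrop 1 e) = y - e 0 := by
      rw [piQ_eq_head_add_tail hq he, div_left_inj' (by positivity)] at hey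
      linarith
    rcases he 0 with h0 | h1
    · refine Or.inl ⟨_, ⟨he.seqDrop 1, by rw [htail, h0, sub_zero]⟩, ?_⟩
      rw [← h0, seqCons_self_seqDrop]
    · refine Or.inr ⟨_, ⟨he.seqDrop 1, by rw [htail, h1]⟩, ?_⟩
      rw [← h1, seqCons_self_seqDrop]
  · rintro (⟨e, ⟨he, rfl⟩, rfl⟩ | ⟨e, ⟨he, hey⟩, rfl⟩)
    · exact ⟨he.seqCons (Or.inl rfl), by rw [piQ_seqCons hq (Or.inl rfl) he, zero_add]⟩
    · exact ⟨he.seqCons (Or.inr rfl), by rw [piQ_seqCons hq (Or.inr rfl) he, hey, add_sub_cancel]⟩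

theorem encard_sigmaSet_div (hq : 1 < q) (y : ℝ) :
    (SigmaSet q (y / q)).encard = (SigmaSet q y).encard + (SigmaSet q (y - 1)).encard := by
  rw [sigmaSet_div_eq hq, Set.encard_union_eq, (seqCons_injective 0).encard_image,
    (seqCons_injective 1).encard_image]
  rw [Set.disjoint_left]
  rintro _ ⟨e, -, rfl⟩ ⟨e', -, h⟩
  exact one_ne_zero (congrFun h 0)

theorem sigmaSet_eq_empty_of_lt (hq : 1 < q) {y : ℝ} (hy : 1 / (q - 1) < y) :
    SigmaSet q y = ∅ :=
  Set.eq_empty_of_forall_notMem fun _ ⟨he, hey⟩ => (piQ_le hq he).not_gt (hey ▸ hy)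

theorem mem_Iq_of_sigmaSet_nonempty (hq : 1 < q) {y : ℝ} (h : (SigmaSet q y).Nonempty) :
    y ∈ Iq q := by
  obtain ⟨e, he, rfl⟩ := h
  exact ⟨piQ_nonneg hq he, piQ_le hq he⟩

theorem encard_sigmaSet_add_one_div (hq : 1 < q) {y : ℝ} (hy : 1 / (q - 1) < y + 1) :
    (SigmaSet q ((y + 1) / q)).encard = (SigmaSet q y).encard := by
  rw [encard_sigmaSet_div hq, sigmaSet_eq_empty_of_lt hq hy, add_sub_cancel_right,
    Set.encard_empty, zero_add]

theorem one_div_sub_one_lt_add_one_div_add_one (hq : 1 < q) {y : ℝ} (hy : 1 / (q - 1) < y + 1) :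
    1 / (q - 1) < (y + 1) / q + 1 := by
  have hq1 : 0 < q - 1 := by linarith
  have h1 : 1 / (q * (q - 1)) < (y + 1) / q := by
    rw [mul_comm, ← div_div]
    gcongr
  have h2 : 1 / (q - 1) = 1 / (q * (q - 1)) + 1 / q := by
    field_simp
    ring
  have h3 : 1 / q < 1 := (div_lt_one (by linarith)).2 hq
  linarith

theorem encard_sigmaSet_iterate_add_one_div (hq : 1 < q) {y : ℝ} (hy : 1 / (q - 1) < y + 1)
    (n : ℕ) : (SigmaSet q ((fun z => (z + 1) / q)^[n] y)).encard = (SigmaSet q y).encard := by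
  induction n generalizing y with
  | zero => rfl
  | succ n ih =>
    rw [Function.iterate_succ_apply, ih (one_div_sub_one_lt_add_one_div_add_one hq hy),
      encard_sigmaSet_add_one_div hq hy]

theorem encard_sigmaSet_gMap (hq : 1 < q) (hq2 : q + 1 < q ^ 2) (k : ℕ) {v : ℝ} (hv : 1 ≤ v) :
    (SigmaSet q (gMap q k v)).encard = (SigmaSet q v).encard + (SigmaSet q (v - 1)).encard := by
  have hv' : 1 / (q - 1) < v / q + 1 := by
    have hq1 : 0 < q - 1 := by linarith
    rw [div_lt_iff₀ hq1, add_mul, div_mul_eq_mul_div, div_add' _ _ _ (by positivity),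
      lt_div_iff₀ (by positivity)]
    nlinarith
  rw [gMap, encard_sigmaSet_iterate_add_one_div hq hv', encard_sigmaSet_div hq]

theorem gMap_strictMono (hq : 0 < q) (k : ℕ) : StrictMono (gMap q k) :=
  (StrictMono.iterate (fun _ _ h => by gcongr) _).comp fun _ _ h => by gcongr

end Counting

section Uniqueness

variable {q : ℝ} {K : ℕ} {a : ℕ → ℝ}

theorem head_eq_zero_of_piQ_lt (hq : 1 < q) (ha : IsDigitSeq a) (h : piQ q a < 1 / q) :
    a 0 = 0 := by
  refine (ha 0).resolve_right fun h1 => h.not_ge ?_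
  rw [piQ_eq_head_add_tail hq ha, h1]
  gcongr
  linarith [piQ_nonneg hq (ha.seqDrop 1)]

theorem head_eq_one_of_lt_piQ (hq : 1 < q) (ha : IsDigitSeq a)
    (h : 1 / (q * (q - 1)) < piQ q a) : a 0 = 1 := by
  refine (ha 0).resolve_left fun h0 => h.not_ge ?_
  rw [piQ_eq_head_add_tail hq ha, h0, zero_add, mul_comm, ← div_div]
  gcongr
  exact piQ_le hq (ha.seqDrop 1)

theorem sigmaSet_piQ_eq_singleton (hq : 1 < q) (ha : IsDigitSeq a)
    (h : ∀ n b, IsDigitSeq b → piQ q b = piQ q (seqDrop n a) → b 0 = a n) :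
    SigmaSet q (piQ q a) = {a} := by
  ext b
  refine ⟨fun ⟨hb, hba⟩ => ?_, fun hb => by rw [Set.mem_singleton_iff.1 hb]; exact ⟨ha, rfl⟩⟩
  have hhead : ∀ n, piQ q (seqDrop n b) = piQ q (seqDrop n a) → b n = a n := fun n hn => by
    simpa using h n _ (hb.seqDrop n) hn
  have hdrop : ∀ n, piQ q (seqDrop n b) = piQ q (seqDrop n a) := by
    intro n
    induction n with
    | zero => exact hba
    | succ n ih =>
      have hn := hhead n ih
      rw [piQ_seqDrop_eq hq hb, piQ_seqDrop_eq hq ha, hn, div_left_inj' (by positivity),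
        add_right_inj] at ih
      exact ih
  exact funext fun n => hhead n (hdrop n)

theorem one_sub_mem_Sset (ha : a ∈ Sset K) : (fun j => 1 - a j) ∈ Sset K := by
  obtain ⟨hd, h01, h10⟩ := ha
  refine ⟨hd.one_sub, fun i ⟨hi, hblock⟩ => h10 i ⟨by linarith, fun j hj hjK => ?_⟩,
    fun i ⟨hi, hblock⟩ => h01 i ⟨by linarith, fun j hj hjK => ?_⟩⟩ <;>
  linarith [hblock j hj hjK]

theorem exists_next_zero_of_mem_Sset (ha : a ∈ Sset K) {i : ℕ} (hi : a i = 0) :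
    ∃ p < K, a (i + p + 1) = 0 ∧ ∀ t < p, a (i + t + 1) = 1 := by
  classical
  obtain ⟨j, hj, hjK, hj1⟩ : ∃ j, 1 ≤ j ∧ j ≤ K ∧ a (i + j) ≠ 1 := by
    have := ha.2.1 i
    push Not at this
    exact this hi
  have hex : ∃ p, a (i + p + 1) = 0 :=
    ⟨j - 1, by rw [add_assoc, Nat.sub_add_cancel hj]; exact (ha.1 _).resolve_right hj1⟩
  refine ⟨Nat.find hex, ?_, Nat.find_spec hex, fun t ht => (ha.1 _).resolve_left
    (Nat.find_min hex ht)⟩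
  have : Nat.find hex ≤ j - 1 :=
    Nat.find_le (by rw [add_assoc, Nat.sub_add_cancel hj]; exact (ha.1 _).resolve_right hj1)
  omega

theorem monotone_sum_inv_pow_add_mul (hq : 1 < q) {T : ℝ} (hT : T ≤ 1 / (q - 1)) :
    Monotone fun p : ℕ => ∑ t ∈ Finset.range p, q⁻¹ ^ (t + 1) + q⁻¹ ^ (p + 1) * T := by
  have hr : 0 < q⁻¹ := by positivity
  have hT' : (1 - q⁻¹) * T ≤ 1 := by
    have h1 : 0 ≤ 1 - q⁻¹ := by linarith [inv_lt_one_of_one_lt₀ hq]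
    have h2 : (1 - q⁻¹) * (1 / (q - 1)) = q⁻¹ := by
      have : q - 1 ≠ 0 := by linarith
      field_simp
    nlinarith [mul_le_mul_of_nonneg_left hT h1, inv_lt_one_of_one_lt₀ hq]
  refine monotone_nat_of_le_succ fun p => ?_
  rw [Finset.sum_range_succ, pow_succ q⁻¹ (p + 1)]
  nlinarith [pow_pos hr (p + 1)]

theorem piQ_seqDrop_lt_one_of_mem_Sset (hq : 1 < q)
    (hG : ∑ t ∈ Finset.range K, q⁻¹ ^ (t + 1) < 1) (ha : a ∈ Sset K) {i : ℕ} (hi : a i = 0) :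
    piQ q (seqDrop (i + 1) a) < 1 := by
  set X := {x | ∃ b ∈ Sset K, ∃ i, b i = 0 ∧ piQ q (seqDrop (i + 1) b) = x}
  have hX : BddAbove X := ⟨1 / (q - 1), by
    rintro _ ⟨b, hb, i, -, rfl⟩
    exact piQ_le hq (hb.1.seqDrop _)⟩
  have haX : piQ q (seqDrop (i + 1) a) ∈ X := ⟨a, ha, i, hi, rfl⟩
  set T := sSup X
  have hT : T ≤ 1 / (q - 1) := csSup_le ⟨_, haX⟩ (by
    rintro _ ⟨b, hb, i, -, rfl⟩
    exact piQ_le hq (hb.1.seqDrop _))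
  have hK : 1 ≤ K := by
    obtain ⟨p, hp, -⟩ := exists_next_zero_of_mem_Sset ha hi
    omega
  -- the worst case after a `0` is the block `1^{K-1} 0` followed by the worst case again
  have hrec : ∀ x ∈ X, x ≤ ∑ t ∈ Finset.range (K - 1), q⁻¹ ^ (t + 1) + q⁻¹ ^ K * T := by
    rintro _ ⟨b, hb, i, hbi, rfl⟩
    obtain ⟨p, hpK, hp0, hp1⟩ := exists_next_zero_of_mem_Sset hb hbi
    have hdecomp : piQ q (seqDrop (i + 1) b) = ∑ t ∈ Finset.range p, q⁻¹ ^ (t + 1) +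
        q⁻¹ ^ (p + 1) * piQ q (seqDrop (i + p + 1 + 1) b) := by
      rw [piQ_eq_sum_add_seqDrop hq (hb.1.seqDrop _) (p + 1), seqDrop_seqDrop,
        Finset.sum_range_succ, seqDrop_apply, show p + (i + 1) = i + p + 1 by omega, hp0,
        zero_div, add_zero, show i + 1 + (p + 1) = i + p + 1 + 1 by omega, inv_pow,
        div_eq_inv_mul]
      congr 1
      refine Finset.sum_congr rfl fun t ht => ?_
      rw [seqDrop_apply, show t + (i + 1) = i + t + 1 by omega,
        hp1 t (Finset.mem_range.1 ht), one_div, inv_pow]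
    have hnext : piQ q (seqDrop (i + p + 1 + 1) b) ≤ T := le_csSup hX ⟨b, hb, _, hp0, rfl⟩
    calc piQ q (seqDrop (i + 1) b)
        ≤ ∑ t ∈ Finset.range p, q⁻¹ ^ (t + 1) + q⁻¹ ^ (p + 1) * T := by
          rw [hdecomp]; gcongr
      _ ≤ ∑ t ∈ Finset.range (K - 1), q⁻¹ ^ (t + 1) + q⁻¹ ^ (K - 1 + 1) * T :=
          monotone_sum_inv_pow_add_mul hq hT (by omega)
      _ = _ := by rw [Nat.sub_add_cancel hK]
  have hTrec := csSup_le ⟨_, haX⟩ hrec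
  rw [← Nat.sub_add_cancel hK, Finset.sum_range_succ, Nat.sub_add_cancel hK] at hG
  have hrK : q⁻¹ ^ K < 1 := pow_lt_one₀ (by positivity) (inv_lt_one_of_one_lt₀ hq) (by omega)
  have hTlt : T < 1 := by nlinarith
  exact (le_csSup hX haX).trans_lt hTlt

theorem sigmaSet_piQ_of_mem_Sset (hq : 1 < q) (hG : ∑ t ∈ Finset.range K, q⁻¹ ^ (t + 1) < 1)
    (ha : a ∈ Sset K) : SigmaSet q (piQ q a) = {a} := by
  refine sigmaSet_piQ_eq_singleton hq ha.1 fun n b hb hbn => ?_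
  rcases ha.1 n with h0 | h1
  · rw [h0]
    refine head_eq_zero_of_piQ_lt hq hb ?_
    rw [hbn, piQ_seqDrop_eq hq ha.1, h0, zero_add]
    gcongr
    exact piQ_seqDrop_lt_one_of_mem_Sset hq hG ha h0
  · rw [h1]
    refine head_eq_one_of_lt_piQ hq hb ?_
    have hcompl := piQ_seqDrop_lt_one_of_mem_Sset hq hG (one_sub_mem_Sset ha)
      (show 1 - a n = 0 by rw [h1, sub_self])
    rw [show seqDrop (n + 1) (fun j => 1 - a j) = fun j => 1 - seqDrop (n + 1) a j from rfl,
      piQ_one_sub hq (ha.1.seqDrop _)] at hcompl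
    rw [hbn, piQ_seqDrop_eq hq ha.1, h1, mul_comm, ← div_div]
    gcongr
    linarith

theorem piQ_mem_Uq (hq : 1 < q) (hG : ∑ t ∈ Finset.range K, q⁻¹ ^ (t + 1) < 1)
    (ha : a ∈ Sset K) : piQ q a ∈ Uq q :=
  ⟨⟨piQ_nonneg hq ha.1, piQ_le hq ha.1⟩, by rw [sigmaSet_piQ_of_mem_Sset hq hG ha,
    Set.encard_singleton]⟩

end Uniqueness

theorem IsBonacci.sum_inv_pow_lt_one {K : ℕ} {p q : ℝ} (h : IsBonacci K p) (hpq : p < q) :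
    ∑ t ∈ Finset.range K, q⁻¹ ^ (t + 1) < 1 := by
  obtain ⟨⟨hp1, -⟩, hpK⟩ := h
  have hp0 : 0 < p := by linarith
  have hK : 0 < K := Nat.pos_of_ne_zero fun hK => by simp [hK] at hpK
  have hsum : ∑ t ∈ Finset.range K, p⁻¹ ^ (t + 1) = 1 := by
    have hterm : ∀ t ∈ Finset.range K, p⁻¹ ^ (t + 1) = p ^ (K - 1 - t) / p ^ K := by
      intro t ht
      rw [inv_pow, eq_div_iff (by positivity), ← div_eq_inv_mul,
        div_eq_iff (by positivity), ← pow_add]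
      congr 1
      have := Finset.mem_range.1 ht
      omega
    rw [Finset.sum_congr rfl hterm, ← Finset.sum_div, Finset.sum_range_reflect (p ^ ·) K, ← hpK,
      div_self (by positivity)]
  rw [← hsum]
  refine Finset.sum_lt_sum_of_nonempty (Finset.nonempty_range_iff.2 hK.ne') fun t _ => ?_
  have : 0 < q := by linarith
  gcongr

theorem add_one_lt_sq_of_sum_inv_pow_lt_one {K : ℕ} {q : ℝ} (hq : 0 < q) (hK : 2 ≤ K)
    (h : ∑ t ∈ Finset.range K, q⁻¹ ^ (t + 1) < 1) : q + 1 < q ^ 2 := by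
  have h2 : ∑ t ∈ Finset.range 2, q⁻¹ ^ (t + 1) ≤ ∑ t ∈ Finset.range K, q⁻¹ ^ (t + 1) :=
    Finset.sum_le_sum_of_subset_of_nonneg (Finset.range_subset_range.2 hK)
      fun _ _ _ => by positivity
  have h3 : (q⁻¹ + q⁻¹ ^ 2) * q ^ 2 = q + 1 := by
    field_simp
  simp only [Finset.sum_range_succ, Finset.sum_range_zero, zero_add] at h2
  nlinarith [pow_pos hq 2]

theorem encard_sigmaSet_of_mem_inter_iterate_gMap {q : ℝ} (hq : 1 < q) (hq2 : q + 1 < q ^ 2)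
    {A : Set ℝ} (hA : A ⊆ Uq q) (k n : ℕ) {y : ℝ}
    (hy : y ∈ (⋂ i ∈ Finset.Icc 0 n, (gMap q k)^[i] '' ((fun u => u + 1) '' A)) ∩
      (gMap q k)^[n] '' A) :
    (SigmaSet q y).encard = n + 1 := by
  induction n generalizing y with
  | zero =>
    obtain ⟨-, w, hw, rfl⟩ := hy
    rw [Function.iterate_zero_apply, (hA hw).2, Nat.cast_zero, zero_add]
  | succ n ih =>
    obtain ⟨hy, w, hw, rfl⟩ := hy
    rw [Set.mem_iInter₂] at hy
    have hinj := (gMap_strictMono (by linarith : 0 < q) k).injective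
    have hy' : (gMap q k)^[n] w ∈
        (⋂ i ∈ Finset.Icc 0 n, (gMap q k)^[i] '' ((fun u => u + 1) '' A)) ∩
          (gMap q k)^[n] '' A := by
      refine ⟨Set.mem_iInter₂.2 fun i hi => ?_, w, hw, rfl⟩
      obtain ⟨u, hu, hgu⟩ := hy (i + 1) (by simp only [Finset.mem_Icc] at hi ⊢; omega)
      refine ⟨u, hu, hinj ?_⟩
      rwa [Function.iterate_succ_apply', Function.iterate_succ_apply'] at hgu
    have hv : (gMap q k)^[n] w - 1 ∈ A := by
      simpa [sub_eq_add_neg] using Set.mem_iInter₂.1 hy'.1 0 (by simp)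
    have hv0 : 0 ≤ (gMap q k)^[n] w - 1 := (hA hv).1.1
    rw [Function.iterate_succ_apply', encard_sigmaSet_gMap hq hq2 k (by linarith), ih hy',
      (hA hv).2, Nat.cast_succ]

theorem nonempty_intersection_of_Sk_images_general
    (k m : ℕ) (hk : 3 ≤ k) (qk1 : ℝ) (hqk1 : IsBonacci (k - 1) qk1)
    (q : ℝ) (hq : q ∈ Set.Ioo (1 : ℝ) 2) (hq' : qk1 < q)
    (hne : ((⋂ i ∈ Finset.Icc 0 m,
          (gMap q k)^[i] '' ((fun u => u + 1) '' (piQ q '' Sset (k - 1)))) ∩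
        ((gMap q k)^[m] '' (piQ q '' Sset (k - 1)))).Nonempty) :
    q ∈ Bset ((m : ℕ∞) + 2) := by
  have hG := hqk1.sum_inv_pow_lt_one hq'
  have hq2 : q + 1 < q ^ 2 :=
    add_one_lt_sq_of_sum_inv_pow_lt_one (by linarith [hq.1]) (by omega) hG
  have hA : piQ q '' Sset (k - 1) ⊆ Uq q := by
    rintro _ ⟨a, ha, rfl⟩
    exact piQ_mem_Uq hq.1 hG ha
  obtain ⟨x, hx⟩ := hne
  have hx1 : x - 1 ∈ piQ q '' Sset (k - 1) := by
    simpa [sub_eq_add_neg] using Set.mem_iInter₂.1 hx.1 0 (by simp)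
  have hcount : (SigmaSet q (x / q)).encard = m + 2 := by
    rw [encard_sigmaSet_div hq.1, encard_sigmaSet_of_mem_inter_iterate_gMap hq.1 hq2 hA k m hx,
      (hA hx1).2, add_assoc, one_add_one_eq_two]
  refine ⟨hq, _, mem_Iq_of_sigmaSet_nonempty hq.1 (Set.nonempty_of_encard_ne_zero ?_), hcount⟩
  simp [hcount]

theorem nonempty_intersection_of_Sk_images
    (k m : ℕ) (hk : 3 ≤ k) (hm : 1 ≤ m) (qk1 : ℝ) (hqk1 : IsBonacci (k - 1) qk1)
    (q : ℝ) (hq : q ∈ Set.Ioo (1 : ℝ) 2) (hq' : qk1 < q)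
    (hne : ((⋂ i ∈ Finset.Icc 0 m,
          (gMap q k)^[i] '' ((fun u => u + 1) '' (piQ q '' Sset (k - 1)))) ∩
        ((gMap q k)^[m] '' (piQ q '' Sset (k - 1)))).Nonempty) :
    q ∈ Bset ((m : ℕ∞) + 2) :=
  nonempty_intersection_of_Sk_images_general k m hk qk1 hqk1 q hq hq' hne
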